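/- arXiv:2306.14706 — 2 statements merged into one kernel-verified Lean document; each statement's English description precedes it below -/
import Mathlib

section
/- Let $q_1,\ldots,q_m\in[1,\infty)$ with $1/q=\sum_{i=1}^m 1/q_i$. If $\omega_1^{q_1},\ldots,\omega_m^{q_m}$ are $A_\infty$ weights on $\mathbb{R}^n$ and $u_{\vec\omega}^q=\prod_{i=1}^m\omega_i^q$ is also an $A_\infty$ weight, then for every ball $B\subseteq\mathbb{R}^n$ one has the two-sided comparison $\prod_{i=1}^m\|\omega_i\|_{L^{q_i}(B)}\approx\|u_{\vec\omega}\|_{L^q(B)}$, with implicit constants independent of $B$. -/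
open MeasureTheory Metric Set ENNReal
open scoped BigOperators NNReal

noncomputable section

/-- Euclidean space `ℝⁿ`. -/
abbrev Rn (n : ℕ) := EuclideanSpace ℝ (Fin n)

namespace Paper

/-- Weighted measure of a set, `ω(E) = ∫_E ω`. -/
noncomputable def wInt {n : ℕ} (ω : Rn n → ℝ≥0∞) (s : Set (Rn n)) : ℝ≥0∞ :=
  ∫⁻ y in s, ω y

/-- `‖ω‖_{L^q(s)} = (∫_s ω^q)^{1/q}`. -/
noncomputable def lqN {n : ℕ} (ω : Rn n → ℝ≥0∞) (q : ℝ) (s : Set (Rn n)) : ℝ≥0∞ :=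
  (∫⁻ y in s, ω y ^ q) ^ (1 / q)

/-- Weighted `L^p` norm of a real function on a set: `(∫_s |f|^p σ)^{1/p}`. -/
noncomputable def wLpN {n : ℕ} (f : Rn n → ℝ) (p : ℝ) (σ : Rn n → ℝ≥0∞)
    (s : Set (Rn n)) : ℝ≥0∞ :=
  (∫⁻ y in s, ENNReal.ofReal |f y| ^ p * σ y) ^ (1 / p)

/-- Muckenhoupt `A_p` class, `1 < p < ∞`. -/
def MuckAp {n : ℕ} (ω : Rn n → ℝ≥0∞) (p : ℝ) : Prop :=
  1 < p ∧ ∃ C : ℝ≥0∞, C ≠ ⊤ ∧ ∀ (x : Rn n) (r : ℝ), 0 < r →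
    ((volume (ball x r))⁻¹ * ∫⁻ y in ball x r, ω y) *
      (((volume (ball x r))⁻¹ * ∫⁻ y in ball x r, (ω y) ^ (-(1 / (p - 1)))) ^ (p - 1)) ≤ C

/-- Muckenhoupt `A_1` class. -/
def MuckA1 {n : ℕ} (ω : Rn n → ℝ≥0∞) : Prop :=
  ∃ C : ℝ≥0∞, C ≠ ⊤ ∧ ∀ (x : Rn n) (r : ℝ), 0 < r →
    (volume (ball x r))⁻¹ * ∫⁻ y in ball x r, ω y ≤
      C * essInf ω (volume.restrict (ball x r))

/-- `A_∞ = ⋃_{1 ≤ p < ∞} A_p`. -/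
def MuckAinfty {n : ℕ} (ω : Rn n → ℝ≥0∞) : Prop :=
  MuckA1 ω ∨ ∃ p : ℝ, MuckAp ω p

/-- Average of `b` over the ball `B(x,r)`. -/
noncomputable def ballAvg {n : ℕ} (b : Rn n → ℝ) (x : Rn n) (r : ℝ) : ℝ :=
  ⨍ y in ball x r, b y

/-- BMO seminorm. -/
noncomputable def bmoNorm {n : ℕ} (b : Rn n → ℝ) : ℝ≥0∞ :=
  ⨆ (x : Rn n) (r : ℝ) (_ : 0 < r),
    (volume (ball x r))⁻¹ * ∫⁻ y in ball x r, ENNReal.ofReal |b y - ballAvg b x r|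

/-- The `i`-th factor in the multiple `A_{\vec P, q}` condition; for `p = 1` it is
`(essinf_B ω)⁻¹` and otherwise `((1/|B|)∫_B ω^{-p'})^{1/p'}` with `p' = p/(p-1)`. -/
noncomputable def apFactor {n : ℕ} (ω : Rn n → ℝ≥0∞) (p : ℝ) (s : Set (Rn n)) : ℝ≥0∞ :=
  if p = 1 then (essInf ω (volume.restrict s))⁻¹
  else ((volume s)⁻¹ * ∫⁻ y in s, (ω y) ^ (-(p / (p - 1)))) ^ ((p - 1) / p)

/-- The multiple Muckenhoupt class `A_{\vec P, q}` of Moen. -/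
def IsApq {n m : ℕ} (ω : Fin m → Rn n → ℝ≥0∞) (p : Fin m → ℝ) (q : ℝ) : Prop :=
  ∃ C : ℝ≥0∞, C ≠ ⊤ ∧ ∀ (x : Rn n) (r : ℝ), 0 < r →
    (((volume (ball x r))⁻¹ * ∫⁻ y in ball x r, (∏ i, ω i y) ^ q) ^ (1 / q)) *
      ∏ i, apFactor (ω i) (p i) (ball x r) ≤ C

/-- Generalized weighted Morrey norm of an `ℝ≥0∞`-valued function `F`:
`sup_{x,r} φ(x,r)⁻¹ σ(B(x,r))^{-1/p} (∫_{B(x,r)} F^p σ)^{1/p}`. -/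
noncomputable def morreyNorm {n : ℕ} (F : Rn n → ℝ≥0∞) (p : ℝ)
    (φ : Rn n → ℝ → ℝ≥0∞) (σ : Rn n → ℝ≥0∞) : ℝ≥0∞ :=
  ⨆ (x : Rn n) (r : ℝ) (_ : 0 < r),
    (φ x r)⁻¹ * ((wInt σ (ball x r)) ^ (1 / p))⁻¹ *
      (∫⁻ y in ball x r, F y ^ p * σ y) ^ (1 / p)

/-- Weak generalized weighted Morrey norm. -/
noncomputable def wMorreyNorm {n : ℕ} (F : Rn n → ℝ≥0∞) (p : ℝ)
    (φ : Rn n → ℝ → ℝ≥0∞) (σ : Rn n → ℝ≥0∞) : ℝ≥0∞ :=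
  ⨆ (x : Rn n) (r : ℝ) (_ : 0 < r),
    (φ x r)⁻¹ * ((wInt σ (ball x r)) ^ (1 / p))⁻¹ *
      ⨆ t : ℝ≥0, (t : ℝ≥0∞) *
        (wInt σ (ball x r ∩ {y | (t : ℝ≥0∞) < F y})) ^ (1 / p)

/-- Multilinear fractional maximal operator
`M_α(f)(x) = sup_{r>0} |B(x,r)|^{α/n - m} ∏_i ∫_{B(x,r)} |f_i|`. -/
noncomputable def Malpha {n m : ℕ} (α : ℝ) (f : Fin m → Rn n → ℝ) (x : Rn n) : ℝ≥0∞ :=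
  ⨆ (r : ℝ) (_ : 0 < r),
    (volume (ball x r)) ^ (α / (n : ℝ) - (m : ℝ)) *
      ∏ i, ∫⁻ y in ball x r, ENNReal.ofReal |f i y|

/-- Variant of the multilinear fractional maximal operator with exponents `α_i`:
`sup_{t>0} ∏_i |B(x,t)|^{α_i/n - 1} ∫_{B(x,t)} |f_i|`. -/
noncomputable def MalphaVec {n m : ℕ} (αv : Fin m → ℝ) (f : Fin m → Rn n → ℝ)
    (x : Rn n) : ℝ≥0∞ :=
  ⨆ (t : ℝ) (_ : 0 < t),
    ∏ i, (volume (ball x t)) ^ (αv i / (n : ℝ) - 1) *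
      ∫⁻ y in ball x t, ENNReal.ofReal |f i y|

/-- Multilinear fractional integral operator of Kenig–Stein. -/
noncomputable def Ialpha {n m : ℕ} (α : ℝ) (f : Fin m → Rn n → ℝ) (x : Rn n) : ℝ≥0∞ :=
  ∫⁻ y : Fin m → Rn n,
    (∏ i, ENNReal.ofReal |f i (y i)|) /
      ENNReal.ofReal (∑ i, dist x (y i)) ^ ((m : ℝ) * (n : ℝ) - α)

/-- Iterated commutator of the multilinear fractional maximal operator. -/
noncomputable def McommPi {n m : ℕ} (α : ℝ) (b : Fin m → Rn n → ℝ)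
    (f : Fin m → Rn n → ℝ) (x : Rn n) : ℝ≥0∞ :=
  ⨆ (r : ℝ) (_ : 0 < r),
    (volume (ball x r)) ^ (α / (n : ℝ) - (m : ℝ)) *
      ∏ i, ∫⁻ y in ball x r,
        ENNReal.ofReal |b i x - b i y| * ENNReal.ofReal |f i y|

/-- The class `𝒢_ω^p` of almost decreasing functions `φ` (with weight `σ = ω^p`). -/
def Gclass {n : ℕ} (σ : Rn n → ℝ≥0∞) (p : ℝ) (φ : Rn n → ℝ → ℝ≥0∞) : Prop :=
  ∃ C : ℝ≥0∞, C ≠ ⊤ ∧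
    (∀ (x : Rn n) (r r' : ℝ), 0 < r → r ≤ r' → φ x r' ≤ C * φ x r) ∧
    (∀ (x₀ : Rn n) (r₀ : ℝ), 0 < r₀ → ∀ (x : Rn n) (r : ℝ), 0 < r → r ≤ r₀ →
      φ x₀ r₀ ≤ C * φ x r) ∧
    (∀ (x₀ : Rn n) (r₀ : ℝ), 0 < r₀ → ∀ (x : Rn n) (r : ℝ), 0 < r → r ≤ r₀ →
      φ x₀ r₀ * (wInt σ (ball x₀ r₀)) ^ (1 / p) ≤
        C * (φ x r * (wInt σ (ball x r)) ^ (1 / p)))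

/-- `essinf_{t < η < ∞} ∏_i φ_{1i}(x,η) ‖ω_i‖_{L^{p_i}(B(x,η))}`. -/
noncomputable def condNum {n m : ℕ} (φ1 : Fin m → Rn n → ℝ → ℝ≥0∞)
    (ω : Fin m → Rn n → ℝ≥0∞) (p : Fin m → ℝ) (x : Rn n) (t : ℝ) : ℝ≥0∞ :=
  essInf (fun η => ∏ i, φ1 i x η * lqN (ω i) (p i) (ball x η))
    (volume.restrict (Set.Ioi t))

/-- The supremum-type condition `[\vecφ_1, φ_2]_A` (with a logarithmic factor of order `k`;
`k = 0` recovers the plain condition). -/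
noncomputable def supCondA {n m : ℕ} (φ1 : Fin m → Rn n → ℝ → ℝ≥0∞)
    (φ2 : Rn n → ℝ → ℝ≥0∞) (ω : Fin m → Rn n → ℝ≥0∞) (p q : Fin m → ℝ)
    (k : ℕ) : ℝ≥0∞ :=
  ⨆ (x : Rn n) (r : ℝ) (_ : 0 < r), (φ2 x r)⁻¹ *
    ⨆ (t : ℝ) (_ : r < t), ENNReal.ofReal (1 + Real.log (t / r)) ^ k *
      (condNum φ1 ω p x t / ∏ i, lqN (ω i) (q i) (ball x t))

/-- The integral-type condition `[\vecφ_1, φ_2]_B` (with a logarithmic factor of order `k`). -/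
noncomputable def intCondB {n m : ℕ} (φ1 : Fin m → Rn n → ℝ → ℝ≥0∞)
    (φ2 : Rn n → ℝ → ℝ≥0∞) (ω : Fin m → Rn n → ℝ≥0∞) (p q : Fin m → ℝ)
    (k : ℕ) : ℝ≥0∞ :=
  ⨆ (x : Rn n) (r : ℝ) (_ : 0 < r), (φ2 x r)⁻¹ *
    ∫⁻ t in Set.Ioi r, ENNReal.ofReal (1 + Real.log (t / r)) ^ k *
      (condNum φ1 ω p x t / ∏ i, lqN (ω i) (q i) (ball x t)) / ENNReal.ofReal t

end Paper

/-! If `ω_i^{q_i} ∈ A_{p_i}`, then on every ball `B` the `A_{p_i}` condition reads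
`‖ω_i‖_{L^{q_i}(B)} ‖ω_i⁻¹‖_{L^{s_i}(B)} ≲ |B|^{1/q_i + 1/s_i}` with `s_i = q_i / (p_i - 1)`.
Hölder's inequality applied to `1 = u_{\vecω} ∏ ω_i⁻¹` gives
`|B|^{1/q + ∑ 1/s_i} ≤ ‖u_{\vecω}‖_{L^q(B)} ∏ ‖ω_i⁻¹‖_{L^{s_i}(B)}`, and multiplying the
`A_{p_i}` bounds and cancelling the factors `‖ω_i⁻¹‖_{L^{s_i}(B)}` leaves
`∏ ‖ω_i‖_{L^{q_i}(B)} ≲ ‖u_{\vecω}‖_{L^q(B)}`. The reverse inequality is Hölder's inequality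
for `u_{\vecω} = ∏ ω_i`. -/

theorem ENNReal.rpow_finsetSum {ι : Type*} {x : ℝ≥0∞} (hx0 : x ≠ 0) (hxt : x ≠ ⊤) (t : Finset ι)
    (c : ι → ℝ) : x ^ (∑ i ∈ t, c i) = ∏ i ∈ t, x ^ c i := by
  classical
  induction t using Finset.induction_on with
  | empty => simp
  | insert i t hi ih => rw [Finset.sum_insert hi, Finset.prod_insert hi, rpow_add _ _ hx0 hxt, ih]

section Holder

variable {α ι : Type*} [MeasurableSpace α] [Fintype ι] {μ : Measure α}
  {f : ι → α → ℝ≥0∞} {q s : ι → ℝ} {qq : ℝ}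

theorem lintegral_prod_rpow_le (hf : ∀ i, AEMeasurable (f i) μ) (hq : ∀ i, 0 < q i)
    (hqq0 : 0 < qq) (hqq : 1 / qq = ∑ i, 1 / q i) :
    (∫⁻ y, (∏ i, f i y) ^ qq ∂μ) ^ (1 / qq) ≤ ∏ i, (∫⁻ y, f i y ^ q i ∂μ) ^ (1 / q i) := by
  have hsum : ∑ i, qq / q i = 1 := by
    simp_rw [div_eq_mul_one_div qq, ← Finset.mul_sum, ← hqq]
    field_simp
  have holder := ENNReal.lintegral_prod_norm_pow_le Finset.univ
    (fun i _ => ((hf i).pow_const (q i))) hsum fun i _ => (div_pos hqq0 (hq i)).le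
  have hpt : ∀ y, ∏ i, (f i y ^ q i) ^ (qq / q i) = (∏ i, f i y) ^ qq := fun y => by
    rw [← ENNReal.prod_rpow_of_nonneg hqq0.le]
    refine Finset.prod_congr rfl fun i _ => ?_
    rw [← rpow_mul, mul_div_cancel₀ _ (hq i).ne']
  simp only [hpt] at holder
  calc (∫⁻ y, (∏ i, f i y) ^ qq ∂μ) ^ (1 / qq)
      ≤ (∏ i, (∫⁻ y, f i y ^ q i ∂μ) ^ (qq / q i)) ^ (1 / qq) := by gcongr
    _ = ∏ i, (∫⁻ y, f i y ^ q i ∂μ) ^ (1 / q i) := by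
      rw [← ENNReal.prod_rpow_of_nonneg (by positivity)]
      refine Finset.prod_congr rfl fun i _ => ?_
      rw [← rpow_mul]
      field_simp

theorem measure_univ_rpow_le (hf : ∀ i, AEMeasurable (f i) μ) (hqq0 : 0 < qq)
    (hs : ∀ i, 0 < s i) (hfin : ∀ᵐ y ∂μ, ∀ i, f i y ≠ 0 ∧ f i y ≠ ⊤) :
    μ univ ^ (1 / qq + ∑ i, 1 / s i) ≤
      (∫⁻ y, (∏ i, f i y) ^ qq ∂μ) ^ (1 / qq) *
        ∏ i, (∫⁻ y, f i y ^ (-s i) ∂μ) ^ (1 / s i) := by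
  set θ := 1 / qq + ∑ i, 1 / s i
  have hθ : 0 < θ := add_pos_of_pos_of_nonneg (by positivity)
    (Finset.sum_nonneg fun i _ => (one_div_pos.2 (hs i)).le)
  have hsum : 1 / qq * θ⁻¹ + ∑ i, 1 / s i * θ⁻¹ = 1 := by
    rw [← Finset.sum_mul, ← add_mul, mul_inv_cancel₀ hθ.ne']
  have holder := ENNReal.lintegral_mul_prod_norm_pow_le Finset.univ
    (((Finset.aemeasurable_fun_prod Finset.univ fun i _ => hf i).pow_const qq))
    (fun i _ => (hf i).pow_const (-s i)) _ hsum (by positivity) fun i _ => by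
      have := hs i; positivity
  have hpt : ∀ᵐ y ∂μ, ((∏ i, f i y) ^ qq) ^ (1 / qq * θ⁻¹) *
      ∏ i, (f i y ^ (-s i)) ^ (1 / s i * θ⁻¹) = 1 := by
    filter_upwards [hfin] with y hy
    rw [← rpow_mul, ← mul_assoc, mul_one_div_cancel hqq0.ne', one_mul,
      ← ENNReal.prod_rpow_of_nonneg (inv_pos.2 hθ).le, ← Finset.prod_mul_distrib]
    refine Finset.prod_eq_one fun i _ => ?_
    have hexp : θ⁻¹ + -s i * (1 / s i * θ⁻¹) = 0 := by
      rw [neg_mul, ← mul_assoc, mul_one_div_cancel (hs i).ne', one_mul, add_neg_cancel]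
    rw [← rpow_mul, ← rpow_add _ _ (hy i).1 (hy i).2, hexp, rpow_zero]
  rw [lintegral_congr_ae hpt, lintegral_one, rpow_mul,
    Finset.prod_congr rfl fun i _ => rpow_mul _ _ _,
    ENNReal.prod_rpow_of_nonneg (inv_pos.2 hθ).le,
    ← ENNReal.mul_rpow_of_nonneg _ _ (inv_pos.2 hθ).le] at holder
  exact (ENNReal.le_rpow_inv_iff hθ).1 holder

theorem ae_ne_top_of_lintegral_rpow_ne_top {g : α → ℝ≥0∞} {t : ℝ} (hg : AEMeasurable g μ)
    (ht : 0 < t) (h : ∫⁻ y, g y ^ t ∂μ ≠ ⊤) : ∀ᵐ y ∂μ, g y ≠ ⊤ := by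
  filter_upwards [ae_lt_top' (hg.pow_const t) h] with y hy hgy
  rw [hgy, top_rpow_of_pos ht] at hy
  exact lt_irrefl _ hy

theorem ae_ne_zero_of_lintegral_rpow_neg_ne_top {g : α → ℝ≥0∞} {t : ℝ} (hg : AEMeasurable g μ)
    (ht : 0 < t) (h : ∫⁻ y, g y ^ (-t) ∂μ ≠ ⊤) : ∀ᵐ y ∂μ, g y ≠ 0 := by
  filter_upwards [ae_lt_top' (hg.pow_const (-t)) h] with y hy hgy
  rw [hgy, zero_rpow_of_neg (neg_neg_of_pos ht)] at hy
  exact lt_irrefl _ hy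

theorem ae_eq_top_of_lintegral_rpow_neg_eq_zero {g : α → ℝ≥0∞} {t : ℝ} (hg : AEMeasurable g μ)
    (ht : 0 < t) (h : ∫⁻ y, g y ^ (-t) ∂μ = 0) : ∀ᵐ y ∂μ, g y = ⊤ := by
  filter_upwards [(lintegral_eq_zero_iff' (hg.pow_const (-t))).1 h] with y hy
  rcases rpow_eq_zero_iff.1 hy with ⟨_, hneg⟩ | ⟨htop, _⟩
  · linarith
  · exact htop

theorem lintegral_prod_rpow_eq_top (hμ : μ univ ≠ 0) (hqq0 : 0 < qq)
    (hne : ∀ᵐ y ∂μ, ∀ i, f i y ≠ 0) {i₀ : ι} (htop : ∀ᵐ y ∂μ, f i₀ y = ⊤) :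
    ∫⁻ y, (∏ i, f i y) ^ qq ∂μ = ⊤ := by
  have hae : ∀ᵐ y ∂μ, (∏ i, f i y) ^ qq = ⊤ := by
    filter_upwards [hne, htop] with y hy hy₀
    have hprod : ∏ i, f i y = ⊤ := by
      classical exact WithTop.prod_eq_top (Finset.mem_univ i₀) hy₀ fun i _ => hy i
    rw [hprod, top_rpow_of_pos hqq0]
  rw [lintegral_congr_ae hae, lintegral_const, top_mul hμ]

theorem prod_lintegral_rpow_le (hμ0 : μ univ ≠ 0) (hμt : μ univ ≠ ⊤)
    (hf : ∀ i, AEMeasurable (f i) μ) (hq : ∀ i, 0 < q i) (hqq0 : 0 < qq)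
    (hqq : 1 / qq = ∑ i, 1 / q i) (hs : ∀ i, 0 < s i) {K : ι → ℝ≥0∞}
    (hK0 : ∀ i, K i ≠ 0) (hKt : ∀ i, K i ≠ ⊤)
    (hA : ∀ i, (∫⁻ y, f i y ^ q i ∂μ) ^ (1 / q i) * (∫⁻ y, f i y ^ (-s i) ∂μ) ^ (1 / s i) ≤
      K i * μ univ ^ (1 / q i + 1 / s i)) :
    ∏ i, (∫⁻ y, f i y ^ q i ∂μ) ^ (1 / q i) ≤
      (∏ i, K i) * (∫⁻ y, (∏ i, f i y) ^ qq ∂μ) ^ (1 / qq) := by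
  set L : ι → ℝ≥0∞ := fun i => ∫⁻ y, f i y ^ q i ∂μ
  set N : ι → ℝ≥0∞ := fun i => ∫⁻ y, f i y ^ (-s i) ∂μ
  change ∀ i, L i ^ (1 / q i) * N i ^ (1 / s i) ≤ K i * μ univ ^ (1 / q i + 1 / s i) at hA
  change ∏ i, L i ^ (1 / q i) ≤ _
  have hbound : ∀ i, K i * μ univ ^ (1 / q i + 1 / s i) ≠ ⊤ := fun i =>
    have := hq i; have := hs i
    mul_ne_top (hKt i) (rpow_ne_top_of_nonneg (by positivity) hμt)
  by_cases hL0 : ∃ i, L i = 0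
  · obtain ⟨i, hi⟩ := hL0
    rw [Finset.prod_eq_zero (Finset.mem_univ i)
      (by rw [hi, zero_rpow_of_pos (by simpa using hq i)])]
    exact zero_le
  push Not at hL0
  have hNt : ∀ i, N i ≠ ⊤ := fun i hi => hbound i <| top_unique <| (hA i).trans' <| by
    rw [hi, top_rpow_of_pos (by simpa using hs i),
      mul_top ((rpow_eq_zero_iff_of_pos (by simpa using hq i)).not.2 (hL0 i))]
  have hne0 : ∀ᵐ y ∂μ, ∀ i, f i y ≠ 0 :=
    ae_all_iff.2 fun i => ae_ne_zero_of_lintegral_rpow_neg_ne_top (hf i) (hs i) (hNt i)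
  by_cases hN0 : ∃ i, N i = 0
  · obtain ⟨i, hi⟩ := hN0
    have hK : ∏ i, K i ≠ 0 := Finset.prod_ne_zero_iff.2 fun i _ => hK0 i
    rw [lintegral_prod_rpow_eq_top hμ0 hqq0 hne0
      (ae_eq_top_of_lintegral_rpow_neg_eq_zero (hf i) (hs i) hi),
      top_rpow_of_pos (by simpa using hqq0), mul_top hK]
    exact le_top
  push Not at hN0
  have hLt : ∀ i, L i ≠ ⊤ := fun i hi => hbound i <| top_unique <| (hA i).trans' <| by
    rw [hi, top_rpow_of_pos (by simpa using hq i),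
      top_mul ((rpow_eq_zero_iff_of_pos (by simpa using hs i)).not.2 (hN0 i))]
  have hfin : ∀ᵐ y ∂μ, ∀ i, f i y ≠ 0 ∧ f i y ≠ ⊤ := by
    filter_upwards [hne0, ae_all_iff.2 fun i =>
      ae_ne_top_of_lintegral_rpow_ne_top (hf i) (hq i) (hLt i)] with y h0 htop
    exact fun i => ⟨h0 i, htop i⟩
  have hNpos : ∏ i, N i ^ (1 / s i) ≠ 0 := Finset.prod_ne_zero_iff.2 fun i _ =>
    (rpow_eq_zero_iff_of_pos (by simpa using hs i)).not.2 (hN0 i)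
  have hNfin : ∏ i, N i ^ (1 / s i) ≠ ⊤ := ENNReal.prod_ne_top fun i _ =>
    rpow_ne_top_of_nonneg (by simpa using (hs i).le) (hNt i)
  refine (ENNReal.mul_le_mul_iff_left hNpos hNfin).1 ?_
  calc (∏ i, L i ^ (1 / q i)) * ∏ i, N i ^ (1 / s i)
      = ∏ i, L i ^ (1 / q i) * N i ^ (1 / s i) := Finset.prod_mul_distrib.symm
    _ ≤ ∏ i, K i * μ univ ^ (1 / q i + 1 / s i) := Finset.prod_le_prod' fun i _ => hA i
    _ = (∏ i, K i) * μ univ ^ (1 / qq + ∑ i, 1 / s i) := by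
      rw [Finset.prod_mul_distrib, ← ENNReal.rpow_finsetSum hμ0 hμt, Finset.sum_add_distrib, hqq]
    _ ≤ (∏ i, K i) * ((∫⁻ y, (∏ i, f i y) ^ qq ∂μ) ^ (1 / qq) * ∏ i, N i ^ (1 / s i)) := by
      gcongr
      exact measure_univ_rpow_le hf hqq0 hs hfin
    _ = _ := (mul_assoc _ _ _).symm

end Holder

theorem ENNReal.mul_rpow_le_of_inv_mul_mul_inv_mul_rpow_le {V a b C : ℝ≥0∞} {t : ℝ}
    (hV0 : V ≠ 0) (hVt : V ≠ ⊤) (ht : 0 ≤ t) (h : V⁻¹ * a * (V⁻¹ * b) ^ t ≤ C) :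
    a * b ^ t ≤ C * V ^ (1 + t) := by
  have hV : V⁻¹ * a * (V⁻¹ * b) ^ t = (V ^ (1 + t))⁻¹ * (a * b ^ t) := by
    rw [mul_rpow_of_nonneg _ _ ht, ← inv_rpow,
      rpow_add _ _ (ENNReal.inv_ne_zero.2 hVt) (ENNReal.inv_ne_top.2 hV0), rpow_one]
    ring
  rwa [hV, ENNReal.inv_mul_le_iff (rpow_pos (pos_iff_ne_zero.2 hV0) hVt).ne'
    (rpow_ne_top_of_nonneg (by linarith) hVt), mul_comm (V ^ (1 + t))] at h

namespace Paper

variable {n : ℕ}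

theorem MuckA1.muckAp_two {w : Rn n → ℝ≥0∞} (hw : MuckA1 w) : MuckAp w 2 := by
  obtain ⟨C, hCt, hC⟩ := hw
  refine ⟨one_lt_two, C, hCt, fun x r hr => ?_⟩
  have hV0 : volume (ball x r) ≠ 0 := (measure_ball_pos volume x hr).ne'
  have hVt : volume (ball x r) ≠ ⊤ := measure_ball_lt_top.ne
  set V := volume (ball x r)
  set E := essInf w (volume.restrict (ball x r))
  have hinv : ∫⁻ y in ball x r, w y ^ (-1 : ℝ) ≤ E⁻¹ * V := by
    calc ∫⁻ y in ball x r, w y ^ (-1 : ℝ) ≤ ∫⁻ _ in ball x r, E⁻¹ :=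
          lintegral_mono_ae <| (ae_essInf_le (f := w)).mono fun y hy => by
            rw [rpow_neg_one]; exact ENNReal.inv_le_inv.2 hy
      _ = E⁻¹ * V := setLIntegral_const _ _
  norm_num only [rpow_one]
  calc (V⁻¹ * ∫⁻ y in ball x r, w y) * (V⁻¹ * ∫⁻ y in ball x r, w y ^ (-1 : ℝ))
      ≤ (C * E) * (V⁻¹ * (E⁻¹ * V)) := mul_le_mul' (hC x r hr) (by gcongr)
    _ = C * (E * E⁻¹) := by
      rw [mul_comm E⁻¹, ← mul_assoc V⁻¹, ENNReal.inv_mul_cancel hV0 hVt, one_mul, mul_assoc]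
    _ ≤ C := mul_le_of_le_one_right' (ENNReal.mul_inv_le_one E)

theorem MuckAinfty.exists_muckAp {w : Rn n → ℝ≥0∞} (hw : MuckAinfty w) : ∃ p, MuckAp w p :=
  hw.elim (fun h => ⟨2, h.muckAp_two⟩) id

theorem MuckAp.lintegral_mul_le {w : Rn n → ℝ≥0∞} {p : ℝ} (hw : MuckAp w p) :
    ∃ C : ℝ≥0∞, C ≠ ⊤ ∧ ∀ (x : Rn n) (r : ℝ), 0 < r →
      (∫⁻ y in ball x r, w y) * (∫⁻ y in ball x r, w y ^ (-(1 / (p - 1)))) ^ (p - 1) ≤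
        C * volume (ball x r) ^ p := by
  obtain ⟨hp, C, hCt, hC⟩ := hw
  refine ⟨C, hCt, fun x r hr => ?_⟩
  simpa using ENNReal.mul_rpow_le_of_inv_mul_mul_inv_mul_rpow_le
    (measure_ball_pos volume x hr).ne' measure_ball_lt_top.ne (by linarith) (hC x r hr)

theorem MuckAinfty.exists_lintegral_rpow_mul_le {ω : Rn n → ℝ≥0∞} {q : ℝ} (hq : 0 < q)
    (hw : MuckAinfty fun y => ω y ^ q) :
    ∃ (s : ℝ) (K : ℝ≥0∞), 0 < s ∧ K ≠ 0 ∧ K ≠ ⊤ ∧ ∀ (x : Rn n) (r : ℝ), 0 < r →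
      (∫⁻ y in ball x r, ω y ^ q) ^ (1 / q) * (∫⁻ y in ball x r, ω y ^ (-s)) ^ (1 / s) ≤
        K * volume (ball x r) ^ (1 / q + 1 / s) := by
  obtain ⟨p, hp⟩ := hw.exists_muckAp
  obtain ⟨C, hCt, hC⟩ := hp.lintegral_mul_le
  have hp1 : 0 < p - 1 := sub_pos.2 hp.1
  refine ⟨q / (p - 1), (C + 1) ^ (1 / q), div_pos hq hp1,
    (rpow_pos (by simp) (by simpa using hCt)).ne',
    rpow_ne_top_of_nonneg (by positivity) (by simpa using hCt), fun x r hr => ?_⟩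
  have hexp : ∀ y, (ω y ^ q) ^ (-(1 / (p - 1))) = ω y ^ (-(q / (p - 1))) := fun y => by
    rw [← rpow_mul]; ring_nf
  have hAp := hC x r hr
  simp only [hexp] at hAp
  calc (∫⁻ y in ball x r, ω y ^ q) ^ (1 / q) *
        (∫⁻ y in ball x r, ω y ^ (-(q / (p - 1)))) ^ (1 / (q / (p - 1)))
      = ((∫⁻ y in ball x r, ω y ^ q) *
          (∫⁻ y in ball x r, ω y ^ (-(q / (p - 1)))) ^ (p - 1)) ^ (1 / q) := by
        rw [mul_rpow_of_nonneg _ _ (by positivity), ← rpow_mul]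
        congr 2
        field_simp
    _ ≤ ((C + 1) * volume (ball x r) ^ p) ^ (1 / q) :=
        rpow_le_rpow (hAp.trans (by gcongr; exact le_self_add)) (by positivity)
    _ = (C + 1) ^ (1 / q) * volume (ball x r) ^ (1 / q + 1 / (q / (p - 1))) := by
        rw [mul_rpow_of_nonneg _ _ (by positivity), ← rpow_mul]
        congr 2
        field_simp
        ring

end Paper

open Paper in
theorem statement0_general {n m : ℕ} (q : Fin m → ℝ) (qq : ℝ)
    (hq : ∀ i, 1 ≤ q i) (hqq : 1 / qq = ∑ i, 1 / q i)
    (ω : Fin m → Rn n → ℝ≥0∞) (hmeas : ∀ i, Measurable (ω i))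
    (hωi : ∀ i, MuckAinfty (fun y => ω i y ^ q i)) :
    ∃ C₁ C₂ : ℝ≥0∞, C₁ ≠ ⊤ ∧ C₂ ≠ ⊤ ∧ ∀ (x : Rn n) (r : ℝ), 0 < r →
      (∏ i, lqN (ω i) (q i) (ball x r)) ≤
          C₁ * lqN (fun y => ∏ i, ω i y) qq (ball x r) ∧
        lqN (fun y => ∏ i, ω i y) qq (ball x r) ≤
          C₂ * ∏ i, lqN (ω i) (q i) (ball x r) := by
  rcases isEmpty_or_nonempty (Fin m) with hm | hm
  · have hqq0 : qq = 0 := by simpa using hqq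
    exact ⟨1, 1, one_ne_top, one_ne_top, fun x r _ => by simp [lqN, hqq0]⟩
  have hq0 : ∀ i, 0 < q i := fun i => one_pos.trans_le (hq i)
  have hqq0 : 0 < qq := one_div_pos.1 <| hqq ▸
    Finset.sum_pos (fun i _ => one_div_pos.2 (hq0 i)) Finset.univ_nonempty
  choose s K hs hK0 hKt hA using fun i => (hωi i).exists_lintegral_rpow_mul_le (hq0 i)
  refine ⟨∏ i, K i, 1, ENNReal.prod_ne_top fun i _ => hKt i, one_ne_top,
    fun x r hr => ⟨?_, ?_⟩⟩
  · have hμ : volume.restrict (ball x r) univ = volume (ball x r) := Measure.restrict_apply_univ _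
    exact prod_lintegral_rpow_le (hμ ▸ (measure_ball_pos volume x hr).ne')
      (hμ ▸ measure_ball_lt_top.ne) (fun i => (hmeas i).aemeasurable) hq0 hqq0 hqq hs hK0 hKt
      (fun i => hμ ▸ hA i x r hr)
  · rw [one_mul]
    exact lintegral_prod_rpow_le (fun i => (hmeas i).aemeasurable) hq0 hqq0 hqq

open Paper in
/-- if `ω_i^{q_i} ∈ A_∞` and `u_{\vecω}^q ∈ A_∞` (`u_{\vecω} = ∏ ω_i`,
`1/q = ∑ 1/q_i`, `q_i ∈ [1,∞)`), then `∏_i ‖ω_i‖_{L^{q_i}(B)} ≈ ‖u_{\vecω}‖_{L^q(B)}`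
uniformly over balls `B`. -/
theorem statement0 {n m : ℕ} (q : Fin m → ℝ) (qq : ℝ)
    (hq : ∀ i, 1 ≤ q i) (hqq : 1 / qq = ∑ i, 1 / q i)
    (ω : Fin m → Rn n → ℝ≥0∞) (hmeas : ∀ i, Measurable (ω i))
    (hωi : ∀ i, MuckAinfty (fun y => ω i y ^ q i))
    (hu : MuckAinfty (fun y => (∏ i, ω i y) ^ qq)) :
    ∃ C₁ C₂ : ℝ≥0∞, C₁ ≠ ⊤ ∧ C₂ ≠ ⊤ ∧ ∀ (x : Rn n) (r : ℝ), 0 < r →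
      (∏ i, lqN (ω i) (q i) (ball x r)) ≤
          C₁ * lqN (fun y => ∏ i, ω i y) qq (ball x r) ∧
        lqN (fun y => ∏ i, ω i y) qq (ball x r) ≤
          C₂ * ∏ i, lqN (ω i) (q i) (ball x r) :=
  statement0_general q qq hq hqq ω hmeas hωi
end
end

section
/- Let $u$ be a continuous nonnegative function on $(0,\infty)$ and define the supremal operator $(\bar S_u g)(r)=\|ug\|_{L^\infty(r,\infty)}$. Suppose $v_1,v_2$ are nonnegative measurable functions with $\|v_1\|_{L^\infty(0,t)}\in(0,\infty)$ for every $t>0$. Then $\bar S_u$ is bounded from $L^\infty((0,\infty),v_1)$ to $L^\infty((0,\infty),v_2)$ on the cone $\mathbb{A}$ of nondecreasing functions vanishing at $0^+$ if and only if $\big\|v_2\,\bar S_u\big(\|v_1\|_{L^\infty(\cdot,\infty)}^{-1}\big)\big\|_{L^\infty(0,\infty)}<\infty$. -/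
/-!
Write `V t = ‖v₁‖_{L^∞(t,∞)}`; it is antitone, and `v₁ ≤ V` almost everywhere.
Necessity: the functions `1_{(a,∞)} V⁻¹` lie in `𝔸` and have `‖·‖_{L^∞(v₁)} ≤ 1`, so the bound
controls `v₂ S̄_u(V⁻¹)` on `(a,∞)` uniformly in `a > 0`.
Sufficiency: for nondecreasing `g`, `g t · V t ≤ ‖v₁ (g t)‖_{L^∞(t,∞)} ≤ ‖g‖_{L^∞(v₁)}`, so
`g ≤ ‖g‖_{L^∞(v₁)} V⁻¹`, and `S̄_u` is monotone and positively homogeneous.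
-/

open MeasureTheory Metric Set ENNReal
open scoped BigOperators NNReal

noncomputable section

namespace SupremalOperator

open Filter Topology

/-- `tailEssSup f r = ‖f‖_{L^∞(r,∞)}`. -/
def tailEssSup (f : ℝ → ℝ≥0∞) (r : ℝ) : ℝ≥0∞ :=
  essSup f (volume.restrict (Ioi r))

/-- The supremal operator `S̄_u g`. -/
def supremalOp (u g : ℝ → ℝ≥0∞) : ℝ → ℝ≥0∞ :=
  tailEssSup fun t => u t * g t

section TailEssSup

variable (f : ℝ → ℝ≥0∞)

lemma tailEssSup_antitone : Antitone (tailEssSup f) := fun _ _ hab =>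
  essSup_mono_measure' (Measure.restrict_mono (Ioi_subset_Ioi hab) le_rfl)

lemma ae_restrict_Ioi_le_tailEssSup (r : ℝ) :
    ∀ᵐ t ∂volume.restrict (Ioi r), f t ≤ tailEssSup f r :=
  ENNReal.ae_le_essSup f

/-- At a continuity point `t` of the antitone function `tailEssSup f`, the bounds
`f t ≤ tailEssSup f q`, valid for almost every `t > q`, pass to the limit `q → t⁻`; this needs
only countably many `q`, and `tailEssSup f` has only countably many discontinuities. -/
lemma ae_le_tailEssSup : ∀ᵐ t ∂volume, f t ≤ tailEssSup f t := by
  have h_rat : ∀ᵐ t ∂volume, ∀ q : ℚ, (q : ℝ) < t → f t ≤ tailEssSup f q :=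
    ae_all_iff.2 fun q => (ae_restrict_iff' measurableSet_Ioi).1 (ae_restrict_Ioi_le_tailEssSup f q)
  have h_cont : ∀ᵐ t ∂volume, ContinuousAt (tailEssSup f) t := by
    rw [ae_iff]
    exact (tailEssSup_antitone f).countable_not_continuousAt.measure_zero _
  filter_upwards [h_rat, h_cont] with t ht htc
  have h_left : ∀ s < t, f t ≤ tailEssSup f s := fun s hs => by
    obtain ⟨q, hsq, hqt⟩ := exists_rat_btwn hs
    exact (ht q hqt).trans (tailEssSup_antitone f hsq.le)
  exact ge_of_tendsto (htc.tendsto.mono_left nhdsWithin_le_nhds : Tendsto _ (𝓝[<] t) _)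
    (eventually_nhdsWithin_of_forall h_left)

lemma ae_mul_inv_tailEssSup_le_one : ∀ᵐ t ∂volume, f t * (tailEssSup f t)⁻¹ ≤ 1 := by
  filter_upwards [ae_le_tailEssSup f] with t ht
  calc f t * (tailEssSup f t)⁻¹ ≤ tailEssSup f t * (tailEssSup f t)⁻¹ := by gcongr
    _ ≤ 1 := ENNReal.mul_inv_le_one _

end TailEssSup

section Necessity

variable (u v : ℝ → ℝ≥0∞)

/-- Test functions in the cone `𝔸` that increase to `(tailEssSup v)⁻¹` as `a → 0⁺`. -/
def truncInvTail (a : ℝ) : ℝ → ℝ≥0∞ :=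
  (Ioi a).indicator fun t => (tailEssSup v t)⁻¹

lemma truncInvTail_monotone (a : ℝ) : Monotone (truncInvTail v a) := by
  intro s t hst
  by_cases hs : s ∈ Ioi a
  · rw [truncInvTail, indicator_of_mem hs, indicator_of_mem (show t ∈ Ioi a from hs.trans_le hst)]
    exact ENNReal.inv_le_inv.2 (tailEssSup_antitone v hst)
  · rw [truncInvTail, indicator_of_notMem hs]
    exact zero_le

lemma tendsto_truncInvTail {a : ℝ} (ha : 0 < a) :
    Tendsto (truncInvTail v a) (𝓝[>] 0) (𝓝 0) := by
  refine tendsto_const_nhds.congr' ?_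
  filter_upwards [Ioo_mem_nhdsGT ha] with t ht
  exact (indicator_of_notMem (not_lt.2 ht.2.le) _).symm

lemma tailEssSup_mul_truncInvTail_le_one (a r : ℝ) :
    tailEssSup (fun t => v t * truncInvTail v a t) r ≤ 1 := by
  refine essSup_le_of_ae_le _ (ae_restrict_of_ae ?_)
  filter_upwards [ae_mul_inv_tailEssSup_le_one v] with t ht
  refine le_trans ?_ ht
  gcongr
  exact indicator_le_self _ _ t

lemma supremalOp_truncInvTail {a r : ℝ} (har : a ≤ r) :
    supremalOp u (truncInvTail v a) r = supremalOp u (fun t => (tailEssSup v t)⁻¹) r := by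
  refine essSup_congr_ae ((ae_restrict_iff' measurableSet_Ioi).2 (ae_of_all _ fun t ht => ?_))
  simp only [truncInvTail, indicator_of_mem (show t ∈ Ioi a from har.trans_lt ht)]

/-- Test the bound on `truncInvTail v (1 / (n + 1))`, which agrees with `(tailEssSup v)⁻¹` on
`(1 / (n + 1), ∞)`. -/
lemma tailEssSup_supremalOp_inv_le_of_bound (w : ℝ → ℝ≥0∞) {C : ℝ≥0∞}
    (hC : ∀ g : ℝ → ℝ≥0∞, MonotoneOn g (Ioi 0) → Tendsto g (𝓝[>] 0) (𝓝 0) →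
      tailEssSup (fun r => w r * supremalOp u g r) 0 ≤ C * tailEssSup (fun t => v t * g t) 0) :
    tailEssSup (fun r => w r * supremalOp u (fun t => (tailEssSup v t)⁻¹) r) 0 ≤ C := by
  have h_test : ∀ n : ℕ, ∀ᵐ r ∂volume.restrict (Ioi 0),
      w r * supremalOp u (truncInvTail v (1 / (n + 1))) r ≤ C := fun n => by
    have h_bound := hC (truncInvTail v (1 / (n + 1))) ((truncInvTail_monotone v _).monotoneOn _)
      (tendsto_truncInvTail v Nat.one_div_pos_of_nat)
    filter_upwards [ae_restrict_Ioi_le_tailEssSup _ 0] with r hr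
    calc _ ≤ _ := hr
      _ ≤ C * tailEssSup (fun t => v t * truncInvTail v (1 / (n + 1)) t) 0 := h_bound
      _ ≤ C * 1 := by gcongr; exact tailEssSup_mul_truncInvTail_le_one v _ 0
      _ = C := mul_one C
  refine essSup_le_of_ae_le _ ?_
  filter_upwards [ae_all_iff.2 h_test, ae_restrict_mem measurableSet_Ioi] with r hr hr_pos
  obtain ⟨n, hn⟩ := exists_nat_one_div_lt (mem_Ioi.1 hr_pos)
  rw [← supremalOp_truncInvTail u v hn.le]
  exact hr n

end Necessity

section Sufficiency

variable {g : ℝ → ℝ≥0∞} (v : ℝ → ℝ≥0∞)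

lemma mul_tailEssSup_le_of_monotoneOn (hg : MonotoneOn g (Ioi 0)) {t : ℝ} (ht : 0 < t) :
    g t * tailEssSup v t ≤ tailEssSup (fun s => v s * g s) 0 := by
  change g t * essSup v (volume.restrict (Ioi t)) ≤ _
  rw [← ENNReal.essSup_const_mul]
  refine essSup_le_of_ae_le _ ?_
  have h_sub : Ioi t ⊆ Ioi 0 := Ioi_subset_Ioi ht.le
  filter_upwards [ae_restrict_of_ae_restrict_of_subset h_sub (ae_restrict_Ioi_le_tailEssSup _ 0),
    ae_restrict_mem measurableSet_Ioi] with s hs hts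
  calc g t * v s ≤ g s * v s := by gcongr; exact hg ht (ht.trans hts) hts.le
    _ = v s * g s := mul_comm _ _
    _ ≤ _ := hs

lemma le_mul_inv_tailEssSup_of_monotoneOn (hg : MonotoneOn g (Ioi 0)) {t : ℝ} (ht : 0 < t)
    (hA : tailEssSup (fun s => v s * g s) 0 ≠ ⊤) (hV : tailEssSup v t ≠ 0) :
    g t ≤ tailEssSup (fun s => v s * g s) 0 * (tailEssSup v t)⁻¹ := by
  rw [← div_eq_mul_inv, ENNReal.le_div_iff_mul_le (Or.inl hV) (Or.inr hA)]
  exact mul_tailEssSup_le_of_monotoneOn v hg ht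

/-- Wherever `u t * (tailEssSup v t)⁻¹` is finite, either `u t = 0` or `tailEssSup v t ≠ 0`, and
in both cases the pointwise bound on `g` transfers to `u * g`. -/
lemma tailEssSup_supremalOp_le_mul (u w : ℝ → ℝ≥0∞) (hg : MonotoneOn g (Ioi 0))
    (hA : tailEssSup (fun s => v s * g s) 0 ≠ ⊤)
    (hB : tailEssSup (fun r => w r * supremalOp u (fun t => (tailEssSup v t)⁻¹) r) 0 ≠ ⊤) :
    tailEssSup (fun r => w r * supremalOp u g r) 0 ≤
      tailEssSup (fun s => v s * g s) 0 *
        tailEssSup (fun r => w r * supremalOp u (fun t => (tailEssSup v t)⁻¹) r) 0 := by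
  set A := tailEssSup (fun s => v s * g s) 0
  set K : ℝ → ℝ≥0∞ := fun t => u t * (tailEssSup v t)⁻¹
  refine essSup_le_of_ae_le _ ?_
  filter_upwards [ae_restrict_Ioi_le_tailEssSup (fun r => w r * tailEssSup K r) 0,
    ae_restrict_mem measurableSet_Ioi] with r hr hr_pos
  rcases eq_or_ne (w r) 0 with hw | hw
  · simp [hw]
  have hK_fin : tailEssSup K r ≠ ⊤ := fun h =>
    hB (top_le_iff.1 (le_of_eq_of_le (by rw [h, ENNReal.mul_top hw]) hr))
  have h_ug : supremalOp u g r ≤ A * tailEssSup K r := by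
    rw [supremalOp, tailEssSup, tailEssSup, ← ENNReal.essSup_const_mul]
    refine essSup_mono_ae ?_
    filter_upwards [ae_restrict_Ioi_le_tailEssSup K r, ae_restrict_mem measurableSet_Ioi]
      with t hKt hrt
    rcases eq_or_ne (u t) 0 with hu | hu
    · simp [hu]
    have hV : tailEssSup v t ≠ 0 := fun h =>
      hK_fin (top_le_iff.1 (le_of_eq_of_le (by simp [K, h, hu]) hKt))
    calc u t * g t ≤ u t * (A * (tailEssSup v t)⁻¹) := by
          gcongr; exact le_mul_inv_tailEssSup_of_monotoneOn v hg (hr_pos.trans hrt) hA hV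
      _ = A * K t := mul_left_comm _ _ _
  calc w r * supremalOp u g r ≤ w r * (A * tailEssSup K r) := by gcongr
    _ = A * (w r * tailEssSup K r) := mul_left_comm _ _ _
    _ ≤ _ := by gcongr; exact hr

end Sufficiency

end SupremalOperator

open SupremalOperator Filter Topology in
theorem statement6_general (u v₁ v₂ : ℝ → ℝ≥0∞) :
    (∃ C : ℝ≥0∞, C ≠ ⊤ ∧ ∀ g : ℝ → ℝ≥0∞,
        MonotoneOn g (Set.Ioi (0 : ℝ)) →
        Filter.Tendsto g (nhdsWithin 0 (Set.Ioi (0 : ℝ))) (nhds 0) →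
        essSup (fun r => v₂ r * essSup (fun t => u t * g t) (volume.restrict (Set.Ioi r)))
            (volume.restrict (Set.Ioi (0 : ℝ))) ≤
          C * essSup (fun t => v₁ t * g t) (volume.restrict (Set.Ioi (0 : ℝ)))) ↔
      essSup (fun r => v₂ r *
          essSup (fun t => u t * (essSup v₁ (volume.restrict (Set.Ioi t)))⁻¹)
            (volume.restrict (Set.Ioi r)))
        (volume.restrict (Set.Ioi (0 : ℝ))) ≠ ⊤ := by
  show (∃ C : ℝ≥0∞, C ≠ ⊤ ∧ ∀ g : ℝ → ℝ≥0∞, MonotoneOn g (Ioi 0) → Tendsto g (𝓝[>] 0) (𝓝 0) →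
      tailEssSup (fun r => v₂ r * supremalOp u g r) 0 ≤ C * tailEssSup (fun t => v₁ t * g t) 0) ↔
    tailEssSup (fun r => v₂ r * supremalOp u (fun t => (tailEssSup v₁ t)⁻¹) r) 0 ≠ ⊤
  constructor
  · rintro ⟨C, hC, hbound⟩
    exact ne_top_of_le_ne_top hC (tailEssSup_supremalOp_inv_le_of_bound u v₁ v₂ hbound)
  · intro hB
    -- `+ 1` keeps the constant nonzero, which covers `‖g‖_{L^∞(v₁)} = ∞`.
    refine ⟨_ + 1, ENNReal.add_ne_top.2 ⟨hB, ENNReal.one_ne_top⟩, fun g hg _ => ?_⟩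
    rcases eq_or_ne (tailEssSup (fun t => v₁ t * g t) 0) ⊤ with hA | hA
    · rw [hA, ENNReal.mul_top (by simp)]
      exact le_top
    calc _ ≤ _ := tailEssSup_supremalOp_le_mul v₁ u v₂ hg hA hB
      _ ≤ _ := by rw [mul_comm]; gcongr; exact le_self_add

/-- the supremal operator `S̄_u g(r) = ‖u g‖_{L^∞(r,∞)}` is bounded from
`L^∞((0,∞),v₁)` to `L^∞((0,∞),v₂)` on the cone `𝔸` of nondecreasing functions vanishing
at `0⁺` iff `‖v₂ S̄_u(‖v₁‖_{L^∞(·,∞)}⁻¹)‖_{L^∞(0,∞)} < ∞`. -/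
theorem statement6 (u v₁ v₂ : ℝ → ℝ≥0∞)
    (hu : ContinuousOn u (Set.Ioi (0 : ℝ)))
    (hv₁ : Measurable v₁) (hv₂ : Measurable v₂)
    (hv₁fin : ∀ t : ℝ, 0 < t →
      0 < essSup v₁ (volume.restrict (Set.Ioo 0 t)) ∧
        essSup v₁ (volume.restrict (Set.Ioo 0 t)) ≠ ⊤) :
    (∃ C : ℝ≥0∞, C ≠ ⊤ ∧ ∀ g : ℝ → ℝ≥0∞,
        MonotoneOn g (Set.Ioi (0 : ℝ)) →
        Filter.Tendsto g (nhdsWithin 0 (Set.Ioi (0 : ℝ))) (nhds 0) →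
        essSup (fun r => v₂ r * essSup (fun t => u t * g t) (volume.restrict (Set.Ioi r)))
            (volume.restrict (Set.Ioi (0 : ℝ))) ≤
          C * essSup (fun t => v₁ t * g t) (volume.restrict (Set.Ioi (0 : ℝ)))) ↔
      essSup (fun r => v₂ r *
          essSup (fun t => u t * (essSup v₁ (volume.restrict (Set.Ioi t)))⁻¹)
            (volume.restrict (Set.Ioi r)))
        (volume.restrict (Set.Ioi (0 : ℝ))) ≠ ⊤ :=
  statement6_general u v₁ v₂
end
end
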